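/- arXiv:1208.2986 — 3 statements merged into one kernel-verified Lean document; each statement's English description precedes it below -/
import Mathlib

section
/- Let W be a unitary on H ⊗ H satisfying the pentagonal relation W₁₂W₁₃W₂₃ = W₂₃W₁₂. Then the map Γ(x) = W*(1 ⊗ x)W on B(H) is a coassociative comultiplication into B(H ⊗ H), i.e., (Γ ⊗ id) ∘ Γ = (id ⊗ Γ) ∘ Γ where Γ is extended leg-wise. -/
/- STATEMENT 3: If `W` is a unitary on `H ⊗ H` satisfying the pentagonal relation
`W₁₂ W₁₃ W₂₃ = W₂₃ W₁₂`, then `Γ(x) = W* (1 ⊗ x) W` is a coassociative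
comultiplication: `(Γ ⊗ id) ∘ Γ = (id ⊗ Γ) ∘ Γ`.

We model `H ⊗ H` by a Hilbert space `K` and `H ⊗ H ⊗ H` by a Hilbert space `L`,
together with:
* the unital *-embedding `e₂ : B(H) → B(K)`, `x ↦ 1 ⊗ x`;
* the leg *-embeddings `ι₁₃, ι₂₃ : B(K) → B(L)` placing an operator on `H ⊗ H` on
  legs (1,3) and (2,3) of `H ⊗ H ⊗ H`; thus `W₁₃ = ι₁₃ W`, `W₂₃ = ι₂₃ W`, while
  `W₁₂` is given directly;
* compatibility: `ι₁₃ (1 ⊗ x) = ι₂₃ (1 ⊗ x)` (both equal `1 ⊗ 1 ⊗ x`), and `W₁₂`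
  commutes with `1 ⊗ 1 ⊗ x` (disjoint legs).
With these identifications, `(Γ ⊗ id)(T) = W₁₂* (ι₂₃ T) W₁₂` and
`(id ⊗ Γ)(T) = W₂₃* (ι₁₃ T) W₂₃` for `T ∈ B(H ⊗ H)`. -/
theorem pentagon_implies_coassociative
    {H K L : Type*}
    [NormedAddCommGroup H] [InnerProductSpace ℂ H] [CompleteSpace H]
    [NormedAddCommGroup K] [InnerProductSpace ℂ K] [CompleteSpace K]
    [NormedAddCommGroup L] [InnerProductSpace ℂ L] [CompleteSpace L]
    (e₂ : (H →L[ℂ] H) →⋆ₐ[ℂ] (K →L[ℂ] K))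
    (ι₁₃ ι₂₃ : (K →L[ℂ] K) →⋆ₐ[ℂ] (L →L[ℂ] L))
    (W : K →L[ℂ] K) (hW : W ∈ unitary (K →L[ℂ] K))
    (W₁₂ : L →L[ℂ] L) (hW₁₂ : W₁₂ ∈ unitary (L →L[ℂ] L))
    -- compatibility of the third-leg embeddings
    (h_leg3 : ∀ x : H →L[ℂ] H, ι₁₃ (e₂ x) = ι₂₃ (e₂ x))
    -- `W₁₂` commutes with operators acting only on the third leg
    (h_disjoint : ∀ x : H →L[ℂ] H, W₁₂ * ι₂₃ (e₂ x) = ι₂₃ (e₂ x) * W₁₂)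
    -- the pentagonal relation `W₁₂ W₁₃ W₂₃ = W₂₃ W₁₂`
    (h_pentagon : W₁₂ * ι₁₃ W * ι₂₃ W = ι₂₃ W * W₁₂) :
    -- coassociativity: `(Γ ⊗ id)(Γ x) = (id ⊗ Γ)(Γ x)` where `Γ x = W* (1 ⊗ x) W`
    ∀ x : H →L[ℂ] H,
      star W₁₂ * ι₂₃ (star W * e₂ x * W) * W₁₂ =
        star (ι₂₃ W) * ι₁₃ (star W * e₂ x * W) * ι₂₃ W := by
  intro x
  have h2 : star W₁₂ * ι₂₃ (e₂ x) * W₁₂ = ι₂₃ (e₂ x) := by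
    rw [mul_assoc, ← h_disjoint, ← mul_assoc, hW₁₂.1, one_mul]
  simp only [map_mul, map_star, h_leg3]
  calc star W₁₂ * (star (ι₂₃ W) * ι₂₃ (e₂ x) * ι₂₃ W) * W₁₂
      = star (ι₂₃ W * W₁₂) * ι₂₃ (e₂ x) * (ι₂₃ W * W₁₂) := by
        simp [star_mul, mul_assoc]
    _ = star (W₁₂ * ι₁₃ W * ι₂₃ W) * ι₂₃ (e₂ x) * (W₁₂ * ι₁₃ W * ι₂₃ W) := by
        rw [h_pentagon]
    _ = star (ι₂₃ W) * star (ι₁₃ W) * (star W₁₂ * ι₂₃ (e₂ x) * W₁₂) * (ι₁₃ W * ι₂₃ W) := by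
        simp [star_mul, mul_assoc]
    _ = star (ι₂₃ W) * (star (ι₁₃ W) * ι₂₃ (e₂ x) * ι₁₃ W) * ι₂₃ W := by
        rw [h2]; simp [mul_assoc]
end

section
/- Let E : B(H) → B(H) be a bounded linear map and Γʳ(x) = V(x ⊗ 1)V* for a unitary V on H ⊗ H. If Γʳ(E(x)) = E(x) ⊗ 1 for all x ∈ B(H), then the range of E is contained in the commutant of {(id ⊗ f)(V) : f normal functional on B(H)}. -/
/- STATEMENT 8: Let `E : B(H) → B(H)` be a bounded linear map and
`Γʳ(x) = V (x ⊗ 1) V*` for a unitary `V` on `H ⊗ H`. If `Γʳ(E x) = E x ⊗ 1` for all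
`x ∈ B(H)`, then the range of `E` is contained in the commutant of
`{(id ⊗ f)(V) : f a normal functional on B(H)}`.

Modeling: `K` plays the role of `H ⊗ H`, `e₁ : x ↦ x ⊗ 1`, and
`rsl f = (id ⊗ f) : B(K) → B(H)` are the right slice maps, which are
`B(H) ⊗ 1`-bimodule maps. -/
theorem range_in_commutant_of_slices
    {H K : Type*}
    [NormedAddCommGroup H] [InnerProductSpace ℂ H] [CompleteSpace H]
    [NormedAddCommGroup K] [InnerProductSpace ℂ K] [CompleteSpace K]
    (e₁ : (H →L[ℂ] H) →L[ℂ] (K →L[ℂ] K))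
    (rsl : ((H →L[ℂ] H) →L[ℂ] ℂ) → (K →L[ℂ] K) →L[ℂ] (H →L[ℂ] H))
    (h_rsl_left : ∀ (f : (H →L[ℂ] H) →L[ℂ] ℂ) (x : H →L[ℂ] H) (T : K →L[ℂ] K),
      rsl f (e₁ x * T) = x * rsl f T)
    (h_rsl_right : ∀ (f : (H →L[ℂ] H) →L[ℂ] ℂ) (x : H →L[ℂ] H) (T : K →L[ℂ] K),
      rsl f (T * e₁ x) = rsl f T * x)
    (V : K →L[ℂ] K) (hV : V ∈ unitary (K →L[ℂ] K))
    (E : (H →L[ℂ] H) →L[ℂ] (H →L[ℂ] H))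
    -- `Γʳ(E x) = E x ⊗ 1` for all `x`
    (hE : ∀ x : H →L[ℂ] H, V * e₁ (E x) * star V = e₁ (E x)) :
    Set.range E ⊆ Set.centralizer {y : H →L[ℂ] H |
      ∃ f : (H →L[ℂ] H) →L[ℂ] ℂ, y = rsl f V} := by
  rintro x ⟨a, rfl⟩ y ⟨f, rfl⟩
  have hcomm : V * e₁ (E a) = e₁ (E a) * V := by
    have h := hE a
    calc V * e₁ (E a) = V * e₁ (E a) * star V * V := by
          rw [mul_assoc, (Unitary.mem_iff.mp hV).1, mul_one]
      _ = e₁ (E a) * V := by rw [h]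
  calc rsl f V * E a = rsl f (V * e₁ (E a)) := (h_rsl_right f (E a) V).symm
    _ = rsl f (e₁ (E a) * V) := by rw [hcomm]
    _ = E a * rsl f V := h_rsl_left f (E a) V
end

section
/- Let A be a Banach algebra, X a right Banach A-module, and suppose X is faithful (for every nonzero x ∈ X there is a ∈ A with x·a ≠ 0). Then X is injective as a right operator A-module if and only if there exists a morphism (bounded A-module map) Φ : CB(A, X) → X that is a left inverse to the canonical map Δ : X → CB(A, X), Δ(x)(a) = x·a, where CB(A, X) carries the A-module structure (Ψ·a)(b) = Ψ(ab). -/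
/- STATEMENT 9: Let `A` be a (completely contractive) Banach algebra and `X` a
faithful right Banach `A`-module. Then `X` is injective as a right `A`-module if
and only if there is a morphism `Φ : CB(A, X) → X` that is a left inverse to the
canonical map `Δ : X → CB(A, X)`, `Δ(x)(a) = x · a`, where `CB(A, X)` carries the
module structure `(Ψ · a)(b) = Ψ(a b)`.

We work with the Banach-space version: bounded maps instead of completely bounded
ones, and Banach modules instead of operator modules. -/

universe u

/-- A right Banach `A`-module: a Banach space with a bounded bilinear right action
satisfying `(x · a) · b = x · (a b)`. -/
structure BanachRightModule (A : Type u) [NormedRing A] [NormedAlgebra ℂ A] where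
  X : Type u
  [iG : NormedAddCommGroup X]
  [iM : NormedSpace ℂ X]
  act : X →L[ℂ] A →L[ℂ] X
  act_act : ∀ (x : X) (a b : A), act (act x a) b = act x (a * b)

attribute [instance] BanachRightModule.iG BanachRightModule.iM

variable {A : Type u} [NormedRing A] [NormedAlgebra ℂ A]

/-- A morphism of right Banach `A`-modules: a bounded linear `A`-module map. -/
def BanachRightModule.IsMorphism (Y Z : BanachRightModule A) (f : Y.X →L[ℂ] Z.X) :
    Prop :=
  ∀ (y : Y.X) (a : A), f (Y.act y a) = Z.act (f y) a

/-- Injectivity of a right Banach `A`-module `M`: for all modules `Y, Z`, every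
injective admissible morphism `Φ : Y → Z` (admissible: there is a contraction
`Ψ : Z → Y` with `Φ ∘ Ψ = id` on the image of `Φ`), and every morphism
`g : Y → M`, there is a morphism `h : Z → M` with `h ∘ Φ = g`. -/
def BanachRightModule.Injective (M : BanachRightModule A) : Prop :=
  ∀ (Y Z : BanachRightModule A) (Φ : Y.X →L[ℂ] Z.X),
    BanachRightModule.IsMorphism Y Z Φ → Function.Injective Φ →
    (∃ Ψ : Z.X →L[ℂ] Y.X, ‖Ψ‖ ≤ 1 ∧ ∀ z ∈ Set.range Φ, Φ (Ψ z) = z) →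
    ∀ g : Y.X →L[ℂ] M.X, BanachRightModule.IsMorphism Y M g →
      ∃ h : Z.X →L[ℂ] M.X, BanachRightModule.IsMorphism Z M h ∧ ∀ y, h (Φ y) = g y

/-- The right `A`-module action on `CB(A, X)`, `(Ψ · a)(b) = Ψ (a * b)`. -/
noncomputable def cbAct (M : BanachRightModule A) :
    (A →L[ℂ] M.X) →L[ℂ] A →L[ℂ] (A →L[ℂ] M.X) :=
  ((ContinuousLinearMap.compL ℂ A (A →L[ℂ] A) (A →L[ℂ] M.X)).flip
    (ContinuousLinearMap.mul ℂ A)).comp (ContinuousLinearMap.compL ℂ A A M.X)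

/-!
`M` embeds into `M × CB(A, M)` (a model of `CB(A¹, M)` for the unitization `A¹`) by
`x ↦ (x, Δ x)`, and the first projection makes this embedding admissible. If `M` is
injective, the identity of `M` extends to a morphism `h` on `M × CB(A, M)`; since
`(x, 0) · a = 0`, faithfulness forces `h (x, 0) = 0`, so `Φ := h (0, ·)` is a left inverse
of `Δ`. Conversely, given `Φ`, a morphism `g : Y → M` and an admissible `φ : Y → Z` split by
`ψ`, the map `z ↦ Φ (b ↦ g (ψ (z · b)))` is a morphism extending `g`.
-/

namespace BanachRightModule

lemma IsMorphism.comp {X Y Z : BanachRightModule A} {f : Y.X →L[ℂ] Z.X}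
    {g : X.X →L[ℂ] Y.X} (hf : IsMorphism Y Z f) (hg : IsMorphism X Y g) :
    IsMorphism X Z (f.comp g) := fun x a => by
  simp only [ContinuousLinearMap.comp_apply, hg x a, hf (g x) a]

lemma cbAct_apply (M : BanachRightModule A) (Ψ : A →L[ℂ] M.X) (a b : A) :
    cbAct M Ψ a b = Ψ (a * b) := rfl

noncomputable abbrev cb (M : BanachRightModule A) : BanachRightModule A where
  X := A →L[ℂ] M.X
  act := cbAct M
  act_act Ψ a b := by
    ext c
    simp only [cbAct_apply, mul_assoc]

lemma isMorphism_act (M : BanachRightModule A) : IsMorphism M M.cb M.act := fun x a => by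
  ext b
  exact M.act_act x a b

noncomputable def liftCb {Z M : BanachRightModule A} (f : Z.X →L[ℂ] M.X) :
    Z.X →L[ℂ] (A →L[ℂ] M.X) :=
  (ContinuousLinearMap.compL ℂ A Z.X M.X f).comp Z.act

lemma liftCb_apply {Z M : BanachRightModule A} (f : Z.X →L[ℂ] M.X) (z : Z.X) (b : A) :
    liftCb f z b = f (Z.act z b) := rfl

lemma isMorphism_liftCb {Z M : BanachRightModule A} (f : Z.X →L[ℂ] M.X) :
    IsMorphism Z M.cb (liftCb f) := fun z a => by
  ext b
  exact congrArg f (Z.act_act z a b)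

/-- `CB(A¹, M)` for the unitization `A¹`: `(x, Ψ)` stands for `a + λ ↦ Ψ a + λ x`. -/
noncomputable abbrev cbUnitization (M : BanachRightModule A) : BanachRightModule A where
  X := M.X × (A →L[ℂ] M.X)
  act := ((ContinuousLinearMap.prodₗᵢ ℂ).toLinearIsometry.toContinuousLinearMap.comp
      ((ContinuousLinearMap.id ℂ (A →L[ℂ] M.X)).prod M.cb.act)).comp
    (ContinuousLinearMap.snd ℂ M.X (A →L[ℂ] M.X))
  act_act p a b := Prod.ext rfl (M.cb.act_act p.2 a b)

lemma cbUnitization_act_apply (M : BanachRightModule A) (p : M.cbUnitization.X) (a : A) :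
    M.cbUnitization.act p a = (p.2 a, M.cb.act p.2 a) := rfl

noncomputable def toCbUnitization (M : BanachRightModule A) :
    M.X →L[ℂ] M.cbUnitization.X :=
  (ContinuousLinearMap.id ℂ M.X).prod M.act

lemma isMorphism_toCbUnitization (M : BanachRightModule A) :
    IsMorphism M M.cbUnitization M.toCbUnitization := fun x a =>
  Prod.ext rfl (M.isMorphism_act x a)

lemma injective_toCbUnitization (M : BanachRightModule A) :
    Function.Injective M.toCbUnitization := fun _ _ h => congrArg Prod.fst h

lemma admissible_toCbUnitization (M : BanachRightModule A) :
    ∃ Ψ : M.cbUnitization.X →L[ℂ] M.X, ‖Ψ‖ ≤ 1 ∧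
      ∀ z ∈ Set.range M.toCbUnitization, M.toCbUnitization (Ψ z) = z :=
  ⟨ContinuousLinearMap.fst ℂ _ _, ContinuousLinearMap.norm_fst_le ℂ _ _,
    by rintro _ ⟨x, rfl⟩; rfl⟩

section Faithful

variable {M : BanachRightModule A} (h_faithful : ∀ x : M.X, x ≠ 0 → ∃ a : A, M.act x a ≠ 0)
include h_faithful

lemma IsMorphism.map_inl_eq_zero {h : M.cbUnitization.X →L[ℂ] M.X}
    (hh : IsMorphism M.cbUnitization M h) (x : M.X) : h (x, 0) = 0 := by
  by_contra hne
  obtain ⟨a, ha⟩ := h_faithful _ hne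
  refine ha ?_
  rw [← hh, cbUnitization_act_apply]
  simp only [zero_apply, map_zero]
  exact map_zero h

lemma IsMorphism.map_eq_map_inr {h : M.cbUnitization.X →L[ℂ] M.X}
    (hh : IsMorphism M.cbUnitization M h) (p : M.cbUnitization.X) : h p = h (0, p.2) := by
  conv_lhs => rw [← Prod.fst_add_snd p, map_add, hh.map_inl_eq_zero h_faithful, zero_add]

lemma IsMorphism.comp_inr {h : M.cbUnitization.X →L[ℂ] M.X}
    (hh : IsMorphism M.cbUnitization M h) :
    IsMorphism M.cb M (h.comp (ContinuousLinearMap.inr ℂ M.X (A →L[ℂ] M.X))) := fun Ψ a =>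
  (hh.map_eq_map_inr h_faithful _).symm.trans (hh (0, Ψ) a)

theorem exists_leftInverse_act_of_injective (hM : M.Injective) :
    ∃ Φ : (A →L[ℂ] M.X) →L[ℂ] M.X, IsMorphism M.cb M Φ ∧ ∀ x : M.X, Φ (M.act x) = x := by
  obtain ⟨h, hh, h_ext⟩ := hM M M.cbUnitization M.toCbUnitization
    M.isMorphism_toCbUnitization M.injective_toCbUnitization
    M.admissible_toCbUnitization (ContinuousLinearMap.id ℂ M.X) (fun _ _ => rfl)
  exact ⟨h.comp (ContinuousLinearMap.inr ℂ M.X (A →L[ℂ] M.X)), hh.comp_inr h_faithful,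
    fun x => (hh.map_eq_map_inr h_faithful _).symm.trans (h_ext x)⟩

end Faithful

theorem injective_of_leftInverse_act {M : BanachRightModule A} (Φ : (A →L[ℂ] M.X) →L[ℂ] M.X)
    (hΦ : IsMorphism M.cb M Φ) (hΦΔ : ∀ x : M.X, Φ (M.act x) = x) : M.Injective := by
  rintro Y Z φ hφ φ_inj ⟨ψ, -, hψ⟩ g hg
  refine ⟨Φ.comp (liftCb (g.comp ψ)), hΦ.comp (isMorphism_liftCb _), fun y => ?_⟩
  have hψφ : ∀ y, ψ (φ y) = y := fun y => φ_inj (hψ (φ y) ⟨y, rfl⟩)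
  have hlift : liftCb (g.comp ψ) (φ y) = M.act (g y) := by
    ext b
    rw [liftCb_apply, ContinuousLinearMap.comp_apply, ← hφ, hψφ, hg]
  rw [ContinuousLinearMap.comp_apply, hlift, hΦΔ]

end BanachRightModule

open BanachRightModule in
theorem injective_iff_left_inverse_of_delta (M : BanachRightModule A)
    -- `M` is faithful
    (h_faithful : ∀ x : M.X, x ≠ 0 → ∃ a : A, M.act x a ≠ 0) :
    M.Injective ↔
      ∃ Φ : (A →L[ℂ] M.X) →L[ℂ] M.X,
        (∀ (Ψ : A →L[ℂ] M.X) (a : A), Φ (cbAct M Ψ a) = M.act (Φ Ψ) a) ∧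
        -- `Φ` is a left inverse to `Δ : x ↦ (a ↦ x · a)`
        (∀ x : M.X, Φ (M.act x) = x) :=
  ⟨exists_leftInverse_act_of_injective h_faithful,
    fun ⟨Φ, hΦ, hΦΔ⟩ => injective_of_leftInverse_act Φ hΦ hΦΔ⟩
end
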